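/- arXiv:1905.02279 — 9 statements merged into one kernel-verified Lean document; each statement's English description precedes it below -/
import Mathlib

section
/- Let A ∈ F^{s×t} be a Cauchy matrix and let s, t, r ∈ ℕ satisfy t - s < r ≤ t. Then the matrix M = [A ; (−I_r 0_{r×(t−r)})]^T (of size t × (s+r)) has the property that every t of its columns are linearly independent. Equivalently, M is a parity-check matrix of a linear code of length s+r, dimension s+r−t, and minimum Hamming distance t+1 (an MDS code). -/
open Polynomial Finset

/-- Lemma 1 (column form): every `t` columns of the `t × (s+r)` matrix
`M = [A ; (-I_r | 0)]ᵀ`, where `A` is an `s × t` Cauchy matrix and `t - s < r ≤ t`,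
are linearly independent; i.e. `M` is a parity-check matrix of an
`(s+r, s+r-t, t+1)` MDS code. -/
theorem cauchy_stack_parityCheck_cols_linearIndependent {F : Type*} [Field F]
    (s t r : ℕ) (hst : t - s < r) (hrt : r ≤ t)
    (a : Fin s → F) (b : Fin t → F)
    (ha : Function.Injective a) (hb : Function.Injective b)
    (hab : ∀ i j, a i ≠ b j)
    (A : Matrix (Fin s) (Fin t) F)
    (hA : ∀ i j, A i j = (a i - b j)⁻¹)
    (B : Matrix (Fin r) (Fin t) F)
    (hB : ∀ i j, B i j = if (j : ℕ) = (i : ℕ) then (-1 : F) else 0)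
    (M : Matrix (Fin t) (Fin s ⊕ Fin r) F)
    (hM : M = (Matrix.fromRows A B).transpose)
    (g : Fin t → Fin s ⊕ Fin r) (hg : Function.Injective g) :
    LinearIndependent F (fun i : Fin t => fun l : Fin t => M l (g i)) := by
  classical
  subst hM
  rw [Fintype.linearIndependent_iff]
  intro c hc
  -- pointwise equation
  have hc' : ∀ l : Fin t, ∑ i, c i * (Matrix.fromRows A B) (g i) l = 0 := by
    intro l
    have := congrFun hc l
    simpa [Finset.sum_apply] using this
  set e : Fin s ⊕ Fin r → F := fun x => ∑ i, if g i = x then c i else 0 with he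
  have heg : ∀ i, e (g i) = c i := by
    intro i
    rw [he]
    simp only
    rw [Finset.sum_eq_single i]
    · simp
    · intro i' _ hne
      rw [if_neg (fun h => hne (hg h))]
    · simp
  -- the swapped equation
  have hswap : ∀ l : Fin t,
      (∑ p : Fin s, e (Sum.inl p) * A p l) + (∑ q : Fin r, e (Sum.inr q) * B q l) = 0 := by
    intro l
    have h1 : ∑ x : Fin s ⊕ Fin r, e x * (Matrix.fromRows A B) x l
        = ∑ i, c i * (Matrix.fromRows A B) (g i) l := by
      simp only [he, Finset.sum_mul, ite_mul, zero_mul]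
      rw [Finset.sum_comm]
      refine Finset.sum_congr rfl fun i _ => ?_
      rw [Finset.sum_ite_eq Finset.univ (g i) (fun x => c i * (Matrix.fromRows A B) x l)]
      simp
    have := (h1.trans (hc' l))
    rw [Fintype.sum_sum_type] at this
    simpa [Matrix.fromRows_apply_inl, Matrix.fromRows_apply_inr] using this
  -- the key rational identity
  have hstar : ∀ l : Fin t,
      ∑ p : Fin s, e (Sum.inl p) * (a p - b l)⁻¹
        = if h : (l : ℕ) < r then e (Sum.inr ⟨(l : ℕ), h⟩) else 0 := by
    intro l
    have h2 : (∑ q : Fin r, e (Sum.inr q) * B q l)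
        = if h : (l : ℕ) < r then - e (Sum.inr ⟨(l : ℕ), h⟩) else 0 := by
      by_cases h : (l : ℕ) < r
      · rw [dif_pos h, Finset.sum_eq_single (⟨(l : ℕ), h⟩ : Fin r)]
        · rw [hB]; simp
        · intro q _ hq
          rw [hB, if_neg, mul_zero]
          exact fun hlq => hq (by exact Fin.ext hlq.symm)
        · simp
      · rw [dif_neg h]
        refine Finset.sum_eq_zero fun q _ => ?_
        rw [hB, if_neg, mul_zero]
        exact fun hlq => h (hlq ▸ q.isLt)
    have h3 := hswap l
    rw [h2] at h3
    by_cases h : (l : ℕ) < r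
    · rw [dif_pos h] at h3 ⊢
      have : ∑ p : Fin s, e (Sum.inl p) * A p l = e (Sum.inr ⟨(l : ℕ), h⟩) := by
        linear_combination h3
      rw [← this]
      exact Finset.sum_congr rfl fun p _ => by rw [hA]
    · rw [dif_neg h] at h3 ⊢
      rw [add_zero] at h3
      rw [← h3]
      exact Finset.sum_congr rfl fun p _ => by rw [hA]
  -- supports
  set Simg : Finset (Fin s) := Finset.univ.filter (fun p => ∃ i, g i = Sum.inl p) with hSimg
  set Rimg : Finset (Fin r) := Finset.univ.filter (fun q => ∃ i, g i = Sum.inr q) with hRimg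
  have hzero_out : ∀ p : Fin s, p ∉ Simg → e (Sum.inl p) = 0 := by
    intro p hp
    rw [hSimg] at hp
    simp only [Finset.mem_filter, Finset.mem_univ, true_and, not_exists] at hp
    exact Finset.sum_eq_zero fun i _ => if_neg (hp i)
  -- card identity
  have hcard : Simg.card + Rimg.card = t := by
    have himg : Simg.image Sum.inl ∪ Rimg.image Sum.inr
        = Finset.univ.image g := by
      ext x
      cases x with
      | inl p => simp [hSimg, eq_comm]
      | inr q => simp [hRimg, eq_comm]
    have hdisj : Disjoint (Simg.image Sum.inl) (Rimg.image (Sum.inr : Fin r → Fin s ⊕ Fin r)) := by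
      rw [Finset.disjoint_left]
      rintro x hx hx'
      simp only [Finset.mem_image] at hx hx'
      obtain ⟨p, _, rfl⟩ := hx
      obtain ⟨q, _, h⟩ := hx'
      exact Sum.inr_ne_inl h
    have := Finset.card_union_of_disjoint hdisj
    rw [himg, Finset.card_image_of_injective _ hg,
      Finset.card_image_of_injective _ Sum.inl_injective,
      Finset.card_image_of_injective _ Sum.inr_injective, Finset.card_univ,
      Fintype.card_fin] at this
    omega
  set Lbad : Finset (Fin t) := Rimg.image (Fin.castLE hrt) with hLbad
  set Lgood : Finset (Fin t) := Lbadᶜ with hLgood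
  have hLgood_card : Lgood.card = Simg.card := by
    rw [hLgood, Finset.card_compl, hLbad,
      Finset.card_image_of_injective _ (Fin.castLE_injective hrt), Fintype.card_fin]
    omega
  -- for good l, the sum over Simg vanishes
  have hgood : ∀ l ∈ Lgood, ∑ p ∈ Simg, e (Sum.inl p) * (a p - b l)⁻¹ = 0 := by
    intro l hl
    rw [Finset.sum_subset (Finset.subset_univ Simg)
      (fun p _ hp => by rw [hzero_out p hp, zero_mul])]
    rw [hstar l]
    by_cases h : (l : ℕ) < r
    · rw [dif_pos h]
      refine Finset.sum_eq_zero fun i _ => ?_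
      rw [if_neg]
      intro hgi
      have hq : (⟨(l : ℕ), h⟩ : Fin r) ∈ Rimg := by
        rw [hRimg]; simp only [Finset.mem_filter, Finset.mem_univ, true_and]
        exact ⟨i, hgi⟩
      have : l ∈ Lbad := by
        rw [hLbad, Finset.mem_image]
        exact ⟨_, hq, by ext; simp⟩
      rw [hLgood, Finset.mem_compl] at hl
      exact hl this
    · rw [dif_neg h]
  -- polynomial
  set Q : F[X] := ∑ p ∈ Simg, C (e (Sum.inl p)) * ∏ p' ∈ Simg.erase p, (C (a p') - X) with hQ
  have hQdeg : Q.natDegree ≤ Simg.card - 1 := by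
    refine (Polynomial.natDegree_sum_le _ _).trans ?_
    rw [Finset.fold_max_le]
    refine ⟨Nat.zero_le _, fun p hp => ?_⟩
    refine (Polynomial.natDegree_mul_le).trans ?_
    rw [Polynomial.natDegree_C, zero_add]
    refine (Polynomial.natDegree_prod_le _ _).trans ?_
    calc ∑ p' ∈ Simg.erase p, (C (a p') - X).natDegree
        ≤ ∑ _p' ∈ Simg.erase p, 1 := by
          refine Finset.sum_le_sum fun p' _ => ?_
          refine (Polynomial.natDegree_sub_le _ _).trans ?_
          simp
      _ = (Simg.erase p).card := by simp
      _ ≤ Simg.card - 1 := by rw [Finset.card_erase_of_mem hp]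
  have hQeval : ∀ l ∈ Lgood, Q.eval (b l) = 0 := by
    intro l hl
    rw [hQ]
    rw [Polynomial.eval_finset_sum]
    have : ∀ p ∈ Simg, (C (e (Sum.inl p)) * ∏ p' ∈ Simg.erase p, (C (a p') - X)).eval (b l)
        = (∏ p'' ∈ Simg, (a p'' - b l)) * (e (Sum.inl p) * (a p - b l)⁻¹) := by
      intro p hp
      rw [Polynomial.eval_mul, Polynomial.eval_C, Polynomial.eval_prod]
      simp only [Polynomial.eval_sub, Polynomial.eval_C, Polynomial.eval_X]
      rw [← Finset.mul_prod_erase Simg (fun p'' => a p'' - b l) hp]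
      have hne : a p - b l ≠ 0 := sub_ne_zero.mpr (hab p l)
      field_simp
    rw [Finset.sum_congr rfl this, ← Finset.mul_sum, hgood l hl, mul_zero]
  have hQ0 : Q = 0 := by
    rcases Finset.eq_empty_or_nonempty Simg with hS | hS
    · rw [hQ, hS]; simp
    · refine Polynomial.eq_zero_of_natDegree_lt_card_of_eval_eq_zero' Q (Lgood.image b) ?_ ?_
      · intro x hx
        rw [Finset.mem_image] at hx
        obtain ⟨l, hl, rfl⟩ := hx
        exact hQeval l hl
      · rw [Finset.card_image_of_injective _ hb, hLgood_card]
        have : 1 ≤ Simg.card := Finset.card_pos.mpr hS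
        omega
  -- conclude e (inl p) = 0 for all p
  have hcleft : ∀ p : Fin s, e (Sum.inl p) = 0 := by
    intro p
    by_cases hp : p ∈ Simg
    · have h0 : Q.eval (a p) = 0 := by rw [hQ0]; simp
      rw [hQ, Polynomial.eval_finset_sum] at h0
      rw [Finset.sum_eq_single p] at h0
      · rw [Polynomial.eval_mul, Polynomial.eval_C, Polynomial.eval_prod] at h0
        simp only [Polynomial.eval_sub, Polynomial.eval_C, Polynomial.eval_X] at h0
        have hprod : ∏ p' ∈ Simg.erase p, (a p' - a p) ≠ 0 := by
          rw [Finset.prod_ne_zero_iff]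
          intro p' hp'
          exact sub_ne_zero.mpr fun h => (Finset.mem_erase.mp hp').1 (ha h)
        exact (mul_eq_zero.mp h0).resolve_right hprod
      · intro p' hp' hne
        rw [Polynomial.eval_mul, Polynomial.eval_prod]
        refine mul_eq_zero_of_right _ ?_
        refine Finset.prod_eq_zero (Finset.mem_erase.mpr ⟨fun h => hne h.symm, hp⟩) ?_
        simp
      · intro h; exact absurd hp h
    · exact hzero_out p hp
  -- conclude e (inr q) = 0 for all q
  have hcright : ∀ q : Fin r, e (Sum.inr q) = 0 := by
    intro q
    have h := hstar (Fin.castLE hrt q)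
    have hq : ((Fin.castLE hrt q : Fin t) : ℕ) < r := q.isLt
    rw [dif_pos hq] at h
    have : (⟨((Fin.castLE hrt q : Fin t) : ℕ), hq⟩ : Fin r) = q := by ext; simp
    rw [this] at h
    rw [← h]
    exact Finset.sum_eq_zero fun p _ => by rw [hcleft p, zero_mul]
  intro i
  rw [← heg i]
  cases hgi : g i with
  | inl p => exact hcleft p
  | inr q => exact hcright q
end

section
/- Let A be an s×t Cauchy matrix over a field F with t − s < r ≤ t. Then every t rows of the (s+r)×t matrix obtained by stacking A on top of (−I_r | 0_{r×(t−r)}) are linearly independent. -/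
open Polynomial Finset

lemma cauchy_coeffs_eq_zero {F : Type*} [Field F] {ι κ : Type*} [Fintype ι] [Fintype κ]
    [DecidableEq ι]
    (a : ι → F) (b : κ → F) (ha : Function.Injective a) (hb : Function.Injective b)
    (hab : ∀ i j, a i ≠ b j) (hcard : Fintype.card ι ≤ Fintype.card κ)
    (c : ι → F) (h : ∀ j, ∑ i, c i * (a i - b j)⁻¹ = 0) : ∀ i, c i = 0 := by
  intro i0
  set Q : F[X] := ∑ i, Polynomial.C (c i) * ∏ ℓ ∈ univ.erase i, (Polynomial.C (a ℓ) - X) with hQ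
  have hevalQ : ∀ x, Q.eval x = ∑ i, c i * ∏ ℓ ∈ univ.erase i, (a ℓ - x) := by
    intro x; simp [hQ, Polynomial.eval_finset_sum, Polynomial.eval_prod]
  have hQ0 : Q = 0 := by
    apply Polynomial.eq_zero_of_natDegree_lt_card_of_eval_eq_zero Q hb
    · intro j
      have hP : (∏ ℓ, (a ℓ - b j)) ≠ 0 :=
        Finset.prod_ne_zero_iff.2 fun ℓ _ => sub_ne_zero.2 (hab ℓ j)
      have := congrArg (· * ∏ ℓ, (a ℓ - b j)) (h j)
      simp only [Finset.sum_mul, zero_mul] at this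
      rw [hevalQ, ← this]
      refine Finset.sum_congr rfl fun i _ => ?_
      have hne : a i - b j ≠ 0 := sub_ne_zero.2 (hab i j)
      rw [← Finset.mul_prod_erase univ (fun ℓ => a ℓ - b j) (mem_univ i)]
      field_simp
    · calc Q.natDegree ≤ Fintype.card ι - 1 := by
            apply Polynomial.natDegree_sum_le_of_forall_le
            intro i _
            refine (Polynomial.natDegree_mul_le).trans ?_
            simp only [Polynomial.natDegree_C, zero_add]
            refine (Polynomial.natDegree_prod_le _ _).trans ?_
            have h1 : ∀ ℓ ∈ univ.erase i, (Polynomial.C (a ℓ) - X).natDegree ≤ 1 := by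
              intro ℓ _
              simpa using Polynomial.natDegree_sub_le (Polynomial.C (a ℓ)) X
            have h2 : ∑ ℓ ∈ univ.erase i, (Polynomial.C (a ℓ) - X).natDegree
                ≤ ∑ _ℓ ∈ univ.erase i, 1 := Finset.sum_le_sum h1
            simpa [Finset.card_erase_of_mem, Finset.card_univ] using h2
        _ < Fintype.card κ := by
            have : 0 < Fintype.card ι := Fintype.card_pos_iff.2 ⟨i0⟩
            omega
  have := congrArg (Polynomial.eval (a i0)) hQ0
  rw [hevalQ] at this
  simp only [Polynomial.eval_zero] at this
  rw [Finset.sum_eq_single i0] at this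
  · have hprod : (∏ ℓ ∈ univ.erase i0, (a ℓ - a i0)) ≠ 0 :=
      Finset.prod_ne_zero_iff.2 fun ℓ hℓ =>
        sub_ne_zero.2 fun hEq => (Finset.mem_erase.1 hℓ).1 (ha hEq)
    exact (mul_eq_zero.1 this).resolve_right hprod
  · intro i _ hi
    rw [Finset.prod_eq_zero (Finset.mem_erase.2 ⟨fun hEq => hi hEq.symm, mem_univ i0⟩)]
    · ring
    · ring
  · simp


/-- Every `t` rows of the `(s+r) × t` matrix obtained by stacking an `s × t`
Cauchy matrix `A` on top of `(-I_r | 0_{r×(t-r)})` are linearly independent,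
provided `t - s < r ≤ t`. -/
theorem cauchy_stack_rows_linearIndependent {F : Type*} [Field F]
    (s t r : ℕ) (hst : t - s < r) (hrt : r ≤ t)
    (a : Fin s → F) (b : Fin t → F)
    (ha : Function.Injective a) (hb : Function.Injective b)
    (hab : ∀ i j, a i ≠ b j)
    (A : Matrix (Fin s) (Fin t) F)
    (hA : ∀ i j, A i j = (a i - b j)⁻¹)
    (B : Matrix (Fin r) (Fin t) F)
    (hB : ∀ i j, B i j = if (j : ℕ) = (i : ℕ) then (-1 : F) else 0)
    (g : Fin t → Fin s ⊕ Fin r) (hg : Function.Injective g) :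
    LinearIndependent F (fun i : Fin t => Matrix.fromRows A B (g i)) := by
  classical
  rw [Fintype.linearIndependent_iff]
  intro c hc
  have hcol : ∀ j : Fin t, ∑ i, c i * Matrix.fromRows A B (g i) j = 0 := by
    intro j
    have := congrFun hc j
    simpa [Finset.sum_apply] using this
  set e : {i : Fin t // (g i).isRight} → Fin t :=
    fun i => Fin.castLE hrt ((g i).getRight i.2) with he
  have he_inj : Function.Injective e := by
    intro i i' hii
    have h1 : (g i.1).getRight i.2 = (g i'.1).getRight i'.2 :=
      Fin.castLE_injective hrt hii
    have h2 : g i.1 = g i'.1 := by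
      rw [← Sum.inr_getRight (g i.1) i.2, ← Sum.inr_getRight (g i'.1) i'.2, h1]
    exact Subtype.ext (hg h2)
  set T : Set (Fin t) := Set.range e with hT
  have hL : ∀ i : {i : Fin t // (g i).isLeft}, c i.1 = 0 := by
    refine cauchy_coeffs_eq_zero
      (fun i : {i : Fin t // (g i).isLeft} => a ((g i.1).getLeft i.2))
      (fun j : {j : Fin t // j ∉ T} => b j.1)
      ?_ ?_ (fun i j => hab _ _) ?_ (fun i => c i.1) ?_
    · intro i i' hii
      have h2 : g i.1 = g i'.1 := by
        rw [← Sum.inl_getLeft (g i.1) i.2, ← Sum.inl_getLeft (g i'.1) i'.2, ha hii]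
      exact Subtype.ext (hg h2)
    · intro j j' hjj
      exact Subtype.ext (hb hjj)
    · -- card comparison
      have hcR : Fintype.card {i : Fin t // (g i).isLeft}
          = t - Fintype.card {i : Fin t // (g i).isRight} := by
        have h1 : Fintype.card {i : Fin t // ¬ (g i).isRight}
            = t - Fintype.card {i : Fin t // (g i).isRight} := by
          rw [Fintype.card_subtype_compl, Fintype.card_fin]
        rw [← h1]
        exact Fintype.card_congr (Equiv.subtypeEquivRight fun x => by
          simp [Sum.not_isRight])
      have hcT : Fintype.card {j : Fin t // j ∈ T}
          = Fintype.card {i : Fin t // (g i).isRight} :=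
        Fintype.card_congr (Equiv.ofInjective e he_inj).symm
      have hcK : Fintype.card {j : Fin t // j ∉ T}
          = t - Fintype.card {j : Fin t // j ∈ T} := by
        rw [Fintype.card_subtype_compl, Fintype.card_fin]
      omega
    · -- the linear system on columns outside T
      intro j
      have h0 := hcol j.1
      rw [← Finset.sum_filter_add_sum_filter_not Finset.univ
        (fun i => (g i).isLeft) (fun i => c i * Matrix.fromRows A B (g i) j.1)] at h0
      have hright : ∀ i ∈ Finset.univ.filter (fun i => ¬ (g i).isLeft),
          c i * Matrix.fromRows A B (g i) j.1 = 0 := by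
        intro i hi
        have hiR : (g i).isRight := by
          simpa [Sum.not_isLeft] using (Finset.mem_filter.1 hi).2
        obtain ⟨k, hk⟩ := Sum.isRight_iff.1 hiR
        rw [hk, Matrix.fromRows_apply_inr, hB]
        have hne : (j.1 : ℕ) ≠ (k : ℕ) := by
          intro hEq
          apply j.2
          refine ⟨⟨i, hiR⟩, ?_⟩
          have hkr : (g i).getRight hiR = k :=
            Sum.inr.inj ((Sum.inr_getRight (g i) hiR).trans hk)
          show Fin.castLE hrt ((g i).getRight hiR) = j.1
          rw [hkr]
          exact Fin.ext (by simpa using hEq.symm)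
        simp [hne]
      rw [Finset.sum_eq_zero hright, add_zero] at h0
      have hmem : ∀ x : Fin t,
          x ∈ Finset.univ.filter (fun i => (g i).isLeft) ↔ ((g x).isLeft = true) :=
        fun x => by simp
      rw [Finset.sum_subtype _ hmem
        (fun i => c i * Matrix.fromRows A B (g i) j.1)] at h0
      rw [← h0]
      refine Finset.sum_congr rfl fun i _ => ?_
      obtain ⟨k, hk⟩ := Sum.isLeft_iff.1 i.2
      simp only [hk, Sum.getLeft_inl, Matrix.fromRows_apply_inl, hA]
  -- conclude
  intro i
  rcases hgi : g i with k | k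
  · exact hL ⟨i, by rw [hgi]; rfl⟩
  · have h0 := hcol (Fin.castLE hrt k)
    rw [Finset.sum_eq_single i] at h0
    · rw [hgi, Matrix.fromRows_apply_inr, hB] at h0
      simpa using h0
    · intro i' _ hii
      rcases hgi' : g i' with k' | k'
      · have hz : c i' = 0 := hL ⟨i', by rw [hgi']; rfl⟩
        rw [hz, zero_mul]
      · rw [Matrix.fromRows_apply_inr, hB]
        have hne : (k : ℕ) ≠ (k' : ℕ) := by
          intro hEq
          have hkk : k' = k := Fin.ext hEq.symm
          exact hii (hg (by rw [hgi, hgi', hkk]))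
        simp [Fin.coe_castLE, hne]
    · simp
end

section
/- With the same setup (A an s×t Cauchy matrix, t − s < r ≤ t, M the stacked matrix [A; (−I_r 0)]): suppose rows r_1,...,r_a of M are chosen from A and rows r_{a+1},...,r_t are chosen from (−I_r | 0), with the −1 entries of the latter located in columns i_1,...,i_{t−a}, all ≤ r. If the a×a submatrix of A on rows r_1,...,r_a and the complementary columns {1,...,t} \ {i_1,...,i_{t−a}} is invertible, then the chosen t rows of M are linearly independent. -/
open Matrix


/-- Key step in the proof of Lemma 1: choose `a` rows of `M = [A ; (-I_r | 0)]`
from the Cauchy matrix `A` (via an injection `e`) and `t - a` rows from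
`(-I_r | 0)` (via an injection `f`, so their `-1` entries lie in columns
`f l < r`).  If the `a × a` submatrix of `A` on the rows `e` and the columns
complementary to the columns of the `-1` entries is invertible, then the
chosen `t` rows of `M` are linearly independent. -/
theorem cauchy_stack_chosen_rows_linearIndependent {F : Type*} [Field F]
    (s t r a : ℕ) (hst : t - s < r) (hrt : r ≤ t) (hat : a ≤ t)
    (aa : Fin s → F) (bb : Fin t → F)
    (haa : Function.Injective aa) (hbb : Function.Injective bb)
    (hab : ∀ i j, aa i ≠ bb j)
    (A : Matrix (Fin s) (Fin t) F)
    (hA : ∀ i j, A i j = (aa i - bb j)⁻¹)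
    (B : Matrix (Fin r) (Fin t) F)
    (hB : ∀ i j, B i j = if (j : ℕ) = (i : ℕ) then (-1 : F) else 0)
    (e : Fin a → Fin s) (he : Function.Injective e)
    (f : Fin (t - a) → Fin r) (hf : Function.Injective f)
    (cols : Finset (Fin t))
    (hcols : cols = Finset.univ \ Finset.univ.image (fun l => Fin.castLE hrt (f l)))
    (hcard : cols.card = a)
    (hsub : IsUnit (A.submatrix e (fun i => cols.orderEmbOfFin hcard i))) :
    LinearIndependent F
      (Sum.elim (fun i : Fin a => A (e i)) (fun l : Fin (t - a) => B (f l))) := by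
  rw [Fintype.linearIndependent_iff]
  intro g hg
  have hg' : ∀ j : Fin t,
      (∑ i : Fin a, g (Sum.inl i) * A (e i) j)
      + ∑ l : Fin (t - a), g (Sum.inr l) * B (f l) j = 0 := by
    intro j
    have := congrFun hg j
    simpa [Fintype.sum_sum_type, Finset.sum_apply, Pi.smul_apply, smul_eq_mul] using this
  set S := A.submatrix e (fun i => cols.orderEmbOfFin hcard i) with hS
  have hvec : (fun i => g (Sum.inl i)) ᵥ* S = 0 := by
    funext k
    have hjmem : (cols.orderEmbOfFin hcard k) ∈ cols := Finset.orderEmbOfFin_mem _ _ _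
    have hB0 : ∀ l, B (f l) (cols.orderEmbOfFin hcard k) = 0 := by
      intro l
      rw [hB]
      have hne : ((cols.orderEmbOfFin hcard k : Fin t) : ℕ) ≠ (f l : ℕ) := by
        intro h
        have heq : cols.orderEmbOfFin hcard k = Fin.castLE hrt (f l) := by
          apply Fin.ext; simpa using h
        have hnot : ∀ y : Fin t, y ∈ cols → ∀ l', Fin.castLE hrt (f l') ≠ y := by
          intro y hy
          rw [hcols] at hy
          simp only [Finset.mem_sdiff, Finset.mem_image, Finset.mem_univ, true_and,
            not_exists] at hy
          exact hy
        exact hnot _ hjmem l heq.symm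
      simp [hne]
    have h := hg' (cols.orderEmbOfFin hcard k)
    simp only [hB0, mul_zero, Finset.sum_const_zero, add_zero] at h
    simpa [Matrix.vecMul, dotProduct, hS, Matrix.submatrix_apply] using h
  obtain ⟨u, hu⟩ := hsub
  have hcl : ∀ i, g (Sum.inl i) = 0 := by
    have h1 : S * (↑u⁻¹ : Matrix (Fin a) (Fin a) F) = 1 := by
      rw [← hu]; exact_mod_cast u.mul_inv
    have : (fun i => g (Sum.inl i)) = 0 := by
      calc (fun i => g (Sum.inl i)) = (fun i => g (Sum.inl i)) ᵥ* (1 : Matrix (Fin a) (Fin a) F) := by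
            rw [Matrix.vecMul_one]
        _ = ((fun i => g (Sum.inl i)) ᵥ* S) ᵥ* (↑u⁻¹ : Matrix (Fin a) (Fin a) F) := by
            rw [Matrix.vecMul_vecMul, h1]
        _ = 0 := by rw [hvec, Matrix.zero_vecMul]
    exact fun i => congrFun this i
  have hcr : ∀ l, g (Sum.inr l) = 0 := by
    intro l0
    have h := hg' (Fin.castLE hrt (f l0))
    simp only [hcl, zero_mul, Finset.sum_const_zero, zero_add] at h
    have hterm : ∀ l : Fin (t - a), g (Sum.inr l) * B (f l) (Fin.castLE hrt (f l0))
        = if l = l0 then -g (Sum.inr l) else 0 := by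
      intro l
      rw [hB]
      by_cases hl : l = l0
      · subst hl; simp
      · have hne2 : ((f l0 : ℕ)) ≠ ((f l : ℕ)) := fun hnat =>
          hl ((hf (Fin.ext hnat)).symm)
        simp [Fin.coe_castLE, hne2, hl]
    rw [Finset.sum_congr rfl (fun l _ => hterm l)] at h
    simp at h
    exact h
  intro i
  cases i with
  | inl i => exact hcl i
  | inr l => exact hcr l
end

section
/- Let A be an s×t Cauchy matrix over a field F with t ≤ s + r and r ≤ t. Then the code C = {c ∈ F^{s+r} : [A^T | (−I_r 0_{r×(t−r)})^T] c^T = 0} is MDS: it has length n = s+r, dimension k = s+r−t, and minimum distance n − k + 1 = t + 1. -/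
/-!
If a codeword `(x, y)` has weight at most `t`, the rows `i` of the parity-check matrix whose
`-I` entry does not meet the support of `y` give at least `wt x` Cauchy equations
`∑ j, x j / (a j - b i) = 0`. By partial fractions, `∑ j, x j / (β - a j)` is `P β / nodal β`
for the Lagrange interpolant `P` of degree `< wt x` with `P (a j) = x j / w j` (`w` the nodal
weights), so `P` vanishes at `wt x` points, `P = 0` and `x = 0`; then the `-I` block gives
`y = 0`. Thus any `t` columns of the `t × (s + r)` parity-check matrix are independent: it has
full rank `t`, and any `t + 1` columns carry a dependency, a codeword of weight exactly `t + 1`.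
-/

open Finset Matrix Polynomial Lagrange

theorem eq_zero_of_sum_inv_sub_mul_eq_zero {F ι : Type*} [Field F] [DecidableEq F] [Fintype ι]
    [DecidableEq ι] {a : ι → F} (ha : Function.Injective a) {R : Finset F} (haR : ∀ j, a j ∉ R)
    {x : ι → F} (hx : hammingNorm x ≤ #R) (hsum : ∀ β ∈ R, ∑ j, (a j - β)⁻¹ * x j = 0) :
    x = 0 := by
  set Q : Finset ι := {j | x j ≠ 0}
  have hQ : Set.InjOn a Q := ha.injOn
  set P := interpolate Q a fun j => x j / nodalWeight Q a j with hPdef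
  have hP : P = 0 := by
    refine eq_zero_of_degree_lt_of_eval_finset_eq_zero R
      ((degree_interpolate_lt _ hQ).trans_le (by exact_mod_cast hx)) fun β hβ => ?_
    have hβ' : ∀ j ∈ Q, β ≠ a j := fun j _ h => haR j (h ▸ hβ)
    rw [eval_interpolate_not_at_node _ hβ', mul_eq_zero]
    right
    calc ∑ j ∈ Q, nodalWeight Q a j * (β - a j)⁻¹ * (x j / nodalWeight Q a j)
        = -∑ j ∈ Q, (a j - β)⁻¹ * x j := by
          rw [← sum_neg_distrib]
          refine sum_congr rfl fun j hj => ?_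
          have := nodalWeight_ne_zero hQ hj
          rw [← neg_sub, inv_neg]
          field_simp
      _ = 0 := by
          rw [sum_filter_of_ne fun j _ h => right_ne_zero_of_mul h, hsum β hβ, neg_zero]
  funext j
  by_contra hj
  have hjQ : j ∈ Q := mem_filter.2 ⟨mem_univ j, hj⟩
  have := eval_interpolate_at_node (fun j => x j / nodalWeight Q a j) hQ hjQ
  rw [← hPdef, hP, eval_zero, eq_comm, div_eq_zero_iff] at this
  exact this.elim hj (nodalWeight_ne_zero hQ hjQ)

theorem hammingNorm_coe_finsupp {ι β : Type*} [Fintype ι] [Zero β] [DecidableEq β] (l : ι →₀ β) :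
    hammingNorm ⇑l = #l.support := by
  rw [hammingNorm]
  congr 1
  ext i
  simp

theorem hammingNorm_sum_type {F α β : Type*} [Zero F] [DecidableEq F] [Fintype α] [Fintype β]
    (c : α ⊕ β → F) :
    hammingNorm c = hammingNorm (c ∘ Sum.inl) + hammingNorm (c ∘ Sum.inr) := by
  simp only [hammingNorm, card_filter, Fintype.sum_sum_type, Function.comp_apply]

namespace Matrix

theorem mulVec_eq_linearCombination_col {R ι m : Type*} [CommSemiring R] [Fintype ι]
    (M : Matrix m ι R) (l : ι →₀ R) :
    M *ᵥ ⇑l = Finsupp.linearCombination R M.col l := by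
  rw [Finsupp.linearCombination_apply, Finsupp.sum_fintype _ _ (by simp), mulVec_eq_sum]
  simp only [op_smul_eq_smul]
  rfl

variable {F ι m : Type*} [Field F] [DecidableEq F] [Fintype ι] {M : Matrix m ι F}

theorem linearIndepOn_col_of_hammingNorm_le {k : ℕ}
    (hM : ∀ c, M *ᵥ c = 0 → hammingNorm c ≤ k → c = 0) {S : Finset ι} (hS : #S ≤ k) :
    LinearIndepOn F M.col (S : Set ι) :=
  linearIndepOn_iff.2 fun l hl h0 => DFunLike.coe_injective <|
    hM l (by rw [mulVec_eq_linearCombination_col, h0]) <| by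
      rw [hammingNorm_coe_finsupp]
      exact (card_le_card (by exact_mod_cast (Finsupp.mem_supported F l).1 hl)).trans hS

variable [Fintype m]

theorem mulVecLin_surjective_of_hammingNorm_le
    (hM : ∀ c, M *ᵥ c = 0 → hammingNorm c ≤ Fintype.card m → c = 0)
    (hcard : Fintype.card m ≤ Fintype.card ι) : Function.Surjective M.mulVecLin := by
  obtain ⟨S, -, hS⟩ := exists_subset_card_eq (s := (univ : Finset ι)) (by simpa using hcard)
  have hspan : Submodule.span F (M.col '' S) = ⊤ := by
    rw [Set.image_eq_range]
    exact (linearIndepOn_col_of_hammingNorm_le hM hS.le).span_eq_top_of_card_eq_finrank'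
      (by simp [hS])
  rw [← LinearMap.range_eq_top, M.range_mulVecLin, eq_top_iff, ← hspan]
  exact Submodule.span_mono (Set.image_subset_range _ _)

theorem finrank_ker_mulVecLin_of_hammingNorm_le
    (hM : ∀ c, M *ᵥ c = 0 → hammingNorm c ≤ Fintype.card m → c = 0)
    (hcard : Fintype.card m ≤ Fintype.card ι) :
    Module.finrank F (LinearMap.ker M.mulVecLin) = Fintype.card ι - Fintype.card m := by
  have := LinearMap.finrank_range_add_finrank_ker M.mulVecLin
  rw [LinearMap.range_eq_top.2 (mulVecLin_surjective_of_hammingNorm_le hM hcard), finrank_top,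
    Module.finrank_fintype_fun_eq_card, Module.finrank_fintype_fun_eq_card] at this
  omega

theorem exists_mulVec_eq_zero_hammingNorm_eq
    (hM : ∀ c, M *ᵥ c = 0 → hammingNorm c ≤ Fintype.card m → c = 0)
    (hcard : Fintype.card m < Fintype.card ι) :
    ∃ c, M *ᵥ c = 0 ∧ c ≠ 0 ∧ hammingNorm c = Fintype.card m + 1 := by
  obtain ⟨S, -, hS⟩ := exists_subset_card_eq (s := (univ : Finset ι))
    (n := Fintype.card m + 1) (by simpa using hcard)
  have hdep : ¬LinearIndepOn F M.col (S : Set ι) := fun h => by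
    simpa [hS] using h.fintype_card_le_finrank
  obtain ⟨l, hl, h0, hl0⟩ := linearDepOn_iff'.1 hdep
  have hc : M *ᵥ ⇑l = 0 := by rw [mulVec_eq_linearCombination_col, h0]
  have hl0' : ⇑l ≠ 0 := by simpa using hl0
  refine ⟨l, hc, hl0', le_antisymm ?_ ?_⟩
  · rw [hammingNorm_coe_finsupp, ← hS]
    exact card_le_card (by exact_mod_cast (Finsupp.mem_supported F l).1 hl)
  · by_contra! h
    exact hl0' (hM l hc (by omega))

end Matrix

section CauchyStack

variable {F : Type*} [Field F] {s t : ℕ}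

def cauchyStack (r : ℕ) (a : Fin s → F) (b : Fin t → F) : Matrix (Fin t) (Fin s ⊕ Fin r) F :=
  of fun i => Sum.elim (fun j => (a j - b i)⁻¹) fun j => if (i : ℕ) = j then -1 else 0

theorem cauchyStack_mulVec_apply (r : ℕ) (a : Fin s → F) (b : Fin t → F)
    (c : Fin s ⊕ Fin r → F) (i : Fin t) :
    (cauchyStack r a b *ᵥ c) i =
      ∑ j, (a j - b i)⁻¹ * c (.inl j) - ∑ j : Fin r, if (i : ℕ) = j then c (.inr j) else 0 := by
  simp [cauchyStack, mulVec, dotProduct, Fintype.sum_sum_type, sub_eq_add_neg, ← sum_neg_distrib,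
    apply_ite]

theorem cauchyStack_eq_zero_of_mulVec_eq_zero [DecidableEq F] {r : ℕ} (hrt : r ≤ t)
    {a : Fin s → F} {b : Fin t → F} (ha : Function.Injective a) (hb : Function.Injective b)
    (hab : ∀ i j, a i ≠ b j) {c : Fin s ⊕ Fin r → F} (hc : cauchyStack r a b *ᵥ c = 0)
    (hw : hammingNorm c ≤ t) : c = 0 := by
  set x := c ∘ Sum.inl
  set y := c ∘ Sum.inr
  have hrow (i : Fin t) :
      ∑ j, (a j - b i)⁻¹ * x j = ∑ j : Fin r, if (i : ℕ) = j then y j else 0 :=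
    sub_eq_zero.1 ((cauchyStack_mulVec_apply r a b c i).symm.trans (congrFun hc i))
  -- the rows outside `Y` are Cauchy equations in `x`, and there are at least `wt x` of them
  set Y : Finset (Fin t) := ({j | y j ≠ 0} : Finset (Fin r)).map (Fin.castLEEmb hrt)
  have hx : x = 0 := by
    refine eq_zero_of_sum_inv_sub_mul_eq_zero ha (R := (univ \ Y).image b)
      (fun j hj => ?_) ?_ fun β hβ => ?_
    · obtain ⟨i, -, hi⟩ := mem_image.1 hj
      exact hab j i hi.symm
    · rw [card_image_of_injective _ hb, card_sdiff_of_subset (subset_univ _), card_univ,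
        Fintype.card_fin, card_map]
      have := hammingNorm_sum_type c
      change hammingNorm c = hammingNorm x + #{j | y j ≠ 0} at this
      omega
    · obtain ⟨i, hi, rfl⟩ := mem_image.1 hβ
      rw [hrow i]
      refine sum_eq_zero fun j _ => ite_eq_right_iff.2 fun hij => ?_
      by_contra hj
      exact (mem_sdiff.1 hi).2 (mem_map.2 ⟨j, by simpa using hj, Fin.ext hij.symm⟩)
  have hy : y = 0 := by
    funext j
    simpa [hx, Fin.val_inj, eq_comm] using hrow (Fin.castLE hrt j)
  funext w
  cases w with
  | inl j => exact congrFun hx j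
  | inr j => exact congrFun hy j

end CauchyStack

theorem cauchy_stack_code_is_MDS_general {F : Type*} [Field F] [DecidableEq F]
    (s t r : ℕ) (hst : t - s < r) (hrt : r ≤ t)
    (a : Fin s → F) (b : Fin t → F)
    (ha : Function.Injective a) (hb : Function.Injective b)
    (hab : ∀ i j, a i ≠ b j)
    (A : Matrix (Fin s) (Fin t) F)
    (hA : ∀ i j, A i j = (a i - b j)⁻¹)
    (M : Matrix (Fin t) (Fin s ⊕ Fin r) F)
    (hM : ∀ i z, M i z = Sum.elim (fun j => A j i)
      (fun j : Fin r => if (i : ℕ) = (j : ℕ) then (-1 : F) else 0) z) :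
    Module.finrank F ↥(LinearMap.ker M.mulVecLin) = s + r - t ∧
    (∀ c : Fin s ⊕ Fin r → F, M.mulVec c = 0 → c ≠ 0 → t + 1 ≤ hammingNorm c) ∧
    (∃ c : Fin s ⊕ Fin r → F, M.mulVec c = 0 ∧ c ≠ 0 ∧ hammingNorm c = t + 1) := by
  have hM' : M = cauchyStack r a b := by
    ext i (j | j) <;> simp [hM, hA, cauchyStack]
  subst hM'
  have hcode (c) (hc : cauchyStack r a b *ᵥ c = 0) (hw : hammingNorm c ≤ Fintype.card (Fin t)) :
      c = 0 :=
    cauchyStack_eq_zero_of_mulVec_eq_zero hrt ha hb hab hc (by simpa using hw)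
  have hcard : Fintype.card (Fin t) < Fintype.card (Fin s ⊕ Fin r) := by
    simp only [Fintype.card_fin, Fintype.card_sum]
    omega
  refine ⟨?_, fun c hc hc0 => ?_, ?_⟩
  · simpa using finrank_ker_mulVecLin_of_hammingNorm_le hcode hcard.le
  · by_contra! h
    exact hc0 (hcode c hc (by simpa [Nat.lt_succ_iff] using h))
  · simpa using exists_mulVec_eq_zero_hammingNorm_eq hcode hcard

/-- Lemma 1: the code with parity-check matrix `M = [A ; (-I_r | 0)]ᵀ`, where
`A` is an `s × t` Cauchy matrix and `t - s < r ≤ t`, is an MDS code of length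
`s + r`, dimension `s + r - t`, and minimum Hamming distance `t + 1`. -/
theorem cauchy_stack_code_is_MDS {F : Type*} [Field F] [Fintype F] [DecidableEq F]
    (s t r : ℕ) (hst : t - s < r) (hrt : r ≤ t)
    (a : Fin s → F) (b : Fin t → F)
    (ha : Function.Injective a) (hb : Function.Injective b)
    (hab : ∀ i j, a i ≠ b j)
    (A : Matrix (Fin s) (Fin t) F)
    (hA : ∀ i j, A i j = (a i - b j)⁻¹)
    (M : Matrix (Fin t) (Fin s ⊕ Fin r) F)
    (hM : ∀ i z, M i z = Sum.elim (fun j => A j i)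
      (fun j : Fin r => if (i : ℕ) = (j : ℕ) then (-1 : F) else 0) z) :
    Module.finrank F ↥(LinearMap.ker M.mulVecLin) = s + r - t ∧
    (∀ c : Fin s ⊕ Fin r → F, M.mulVec c = 0 → c ≠ 0 → t + 1 ≤ hammingNorm c) ∧
    (∃ c : Fin s ⊕ Fin r → F, M.mulVec c = 0 ∧ c ≠ 0 ∧ hammingNorm c = t + 1) :=
  cauchy_stack_code_is_MDS_general s t r hst hrt a b ha hb hab A hA M hM
end

section
/- In Construction 1, the local distance satisfies d_{1,x} = r_x − δ_x + 1; i.e., any pattern of at most r_x − δ_x erasures in the local codeword c_x = [m_x, m_x A_{x,x} + y_x U_x] is uniquely correctable given knowledge of the code structure (y_x ∈ F^{δ_x} arbitrary and unknown): if [m, m A_{x,x} + y U_x] and [m', m' A_{x,x} + y' U_x] agree on at least n_x − (r_x − δ_x) coordinates, then they are equal. -/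
/-!
Write `C = ((a i - b j)⁻¹)` for the full `(k + δ) × r` Cauchy matrix, so that the local codeword
of `(m, y)` is `[m, (m, y) C]`. For `u ≠ 0`, the rational function `∑ uᵢ / (aᵢ - X)` has numerator
of degree `< |supp u|` (it is a Lagrange interpolant in barycentric form), so `u C` has at most
`|supp u| - 1` zero coordinates: the systematic code `[u, u C]` has minimum weight `≥ r + 1`.
Two local codewords that differ in at most `r - δ` positions give a difference `u` with
`|supp u| ≤ |supp (m - m')| + δ`, hence total weight `≤ r`, so `u = 0`.
-/

open Finset Polynomial

theorem Lagrange.eq_zero_of_forall_sum_mul_inv_sub_eq_zero {F ι : Type*} [Field F]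
    [DecidableEq ι] {s : Finset ι} {x : ι → F} (hx : Set.InjOn x s) {T : Finset F}
    (hcard : #s ≤ #T) (hxT : ∀ i ∈ s, ∀ t ∈ T, x i ≠ t) {c : ι → F}
    (hc : ∀ t ∈ T, ∑ i ∈ s, c i * (x i - t)⁻¹ = 0) : ∀ i ∈ s, c i = 0 := by
  set w := nodalWeight s x
  have hw : ∀ i ∈ s, w i ≠ 0 := fun i hi => nodalWeight_ne_zero hx hi
  -- first barycentric form: at `t ∈ T` this interpolant is `-nodal(t) * ∑ c i * (x i - t)⁻¹`
  have hP : interpolate s x (fun i => c i * (w i)⁻¹) = 0 := by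
    refine eq_zero_of_degree_lt_of_eval_finset_eq_zero T
      ((degree_interpolate_lt _ hx).trans_le (by exact_mod_cast hcard)) fun t ht => ?_
    have hsum : ∑ i ∈ s, w i * (t - x i)⁻¹ * (c i * (w i)⁻¹) =
        -∑ i ∈ s, c i * (x i - t)⁻¹ := by
      rw [← sum_neg_distrib]
      refine sum_congr rfl fun i hi => ?_
      rw [← neg_sub, inv_neg]
      field_simp [hw i hi]
    rw [eval_interpolate_not_at_node _ fun i hi => (hxT i hi t ht).symm, hsum, hc t ht,
      neg_zero, mul_zero]
  intro i hi
  have hval := eval_interpolate_at_node (fun i => c i * (w i)⁻¹) hx hi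
  rw [hP, eval_zero, eq_comm, mul_eq_zero] at hval
  exact hval.resolve_right (inv_ne_zero (hw i hi))

def cauchyMatrix {F ι κ : Type*} [Field F] (a : ι → F) (b : κ → F) : Matrix ι κ F :=
  Matrix.of fun i j => (a i - b j)⁻¹

theorem eq_zero_of_hammingNorm_add_hammingNorm_vecMul_cauchyMatrix_le {F ι κ : Type*} [Field F]
    [DecidableEq F] [Fintype ι] [Fintype κ] {a : ι → F} {b : κ → F}
    (ha : Function.Injective a) (hb : Function.Injective b) (hab : ∀ i j, a i ≠ b j) {u : ι → F}
    (hu : hammingNorm u + hammingNorm (Matrix.vecMul u (cauchyMatrix a b)) ≤ Fintype.card κ) :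
    u = 0 := by
  classical
  set Z : Finset κ := {j | Matrix.vecMul u (cauchyMatrix a b) j = 0}
  have hZ : #Z + hammingNorm (Matrix.vecMul u (cauchyMatrix a b)) = Fintype.card κ :=
    card_filter_add_card_filter_not _
  have hvanish : ∀ t ∈ Z.image b, ∑ i ∈ {i | u i ≠ 0}, u i * (a i - t)⁻¹ = 0 := by
    simp only [mem_image]
    rintro _ ⟨j, hj, rfl⟩
    rw [sum_filter_of_ne fun i _ hi => left_ne_zero_of_mul hi]
    simpa [Matrix.vecMul, dotProduct, cauchyMatrix] using (mem_filter.mp hj).2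
  have hsupp := Lagrange.eq_zero_of_forall_sum_mul_inv_sub_eq_zero ha.injOn
    (show hammingNorm u ≤ _ by rw [card_image_of_injective _ hb]; omega)
    (fun i _ t ht => by obtain ⟨j, -, rfl⟩ := mem_image.mp ht; exact hab i j) hvanish
  funext i
  by_contra hi
  exact hi (hsupp i (by simpa using hi))

theorem hammingDist_sumElim {α β γ : Type*} [Fintype α] [Fintype β] [DecidableEq γ]
    (f f' : α → γ) (g g' : β → γ) :
    hammingDist (Sum.elim f g) (Sum.elim f' g') = hammingDist f f' + hammingDist g g' := by
  rw [hammingDist, hammingDist, hammingDist, ← card_disjSum]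
  congr 1
  ext (i | j) <;> simp

theorem hammingNorm_finAppend {α : Type*} [Zero α] [DecidableEq α] {k n : ℕ} (x : Fin k → α)
    (y : Fin n → α) : hammingNorm (Fin.append x y) = hammingNorm x + hammingNorm y := by
  simp only [hammingNorm, card_filter, Fin.sum_univ_add, Fin.append_left, Fin.append_right]

theorem Fin.append_sub_append {α : Type*} [Sub α] {k n : ℕ} (x x' : Fin k → α)
    (y y' : Fin n → α) : Fin.append x y - Fin.append x' y' = Fin.append (x - x') (y - y') := by
  ext i
  refine Fin.addCases (fun i => ?_) (fun i => ?_) i <;> simp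

theorem Matrix.vecMul_finAppend {R κ : Type*} [NonUnitalNonAssocSemiring R] {k n : ℕ}
    (x : Fin k → R) (y : Fin n → R) (M : Matrix (Fin (k + n)) κ R) :
    vecMul (Fin.append x y) M =
      vecMul x (M.submatrix (Fin.castAdd n) id) + vecMul y (M.submatrix (Fin.natAdd k) id) := by
  ext j
  simp [vecMul, dotProduct, Fin.sum_univ_add]

/-- Construction 1, local distance `d_{1,x} = r_x - δ_x + 1`: any pattern of at
most `r_x - δ_x` erasures in the local codeword `c_x = [m, mA + yU]` is
uniquely correctable (for unknown `y`). -/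
theorem construction1_local_distance {F : Type*} [Field F] [DecidableEq F]
    (k r δ : ℕ) (hδr : δ < r)
    (a : Fin (k + δ) → F) (b : Fin r → F)
    (ha : Function.Injective a) (hb : Function.Injective b)
    (hab : ∀ i j, a i ≠ b j)
    (A : Matrix (Fin k) (Fin r) F) (U : Matrix (Fin δ) (Fin r) F)
    (hA : ∀ i j, A i j = (a (Fin.castAdd δ i) - b j)⁻¹)
    (hU : ∀ i j, U i j = (a (Fin.natAdd k i) - b j)⁻¹)
    (m m' : Fin k → F) (y y' : Fin δ → F)
    (hagree : (Finset.univ.filter (fun z : Fin k ⊕ Fin r =>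
        Sum.elim m (Matrix.vecMul m A + Matrix.vecMul y U) z ≠
        Sum.elim m' (Matrix.vecMul m' A + Matrix.vecMul y' U) z)).card ≤ r - δ) :
    Sum.elim m (Matrix.vecMul m A + Matrix.vecMul y U) =
      Sum.elim m' (Matrix.vecMul m' A + Matrix.vecMul y' U) := by
  have hparity : ∀ (x : Fin k → F) (z : Fin δ → F),
      Matrix.vecMul x A + Matrix.vecMul z U = Matrix.vecMul (Fin.append x z) (cauchyMatrix a b) := by
    intro x z
    rw [Matrix.vecMul_finAppend]
    congr <;> ext i j
    exacts [hA i j, hU i j]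
  simp only [hparity] at hagree ⊢
  change hammingDist _ _ ≤ r - δ at hagree
  rw [hammingDist_sumElim, hammingDist_eq_hammingNorm, hammingDist_eq_hammingNorm,
    neg_add_eq_sub, neg_add_eq_sub, ← Matrix.sub_vecMul, Fin.append_sub_append] at hagree
  have hy : hammingNorm (y' - y) ≤ δ := hammingNorm_le_card_fintype.trans_eq (Fintype.card_fin δ)
  have hzero : Fin.append (m' - m) (y' - y) = 0 := by
    refine eq_zero_of_hammingNorm_add_hammingNorm_vecMul_cauchyMatrix_le ha hb hab ?_
    rw [hammingNorm_finAppend, Fintype.card_fin]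
    omega
  obtain rfl : m' = m :=
    funext fun i => sub_eq_zero.mp (by simpa using congrFun hzero (Fin.castAdd δ i))
  obtain rfl : y' = y :=
    funext fun i => sub_eq_zero.mp (by simpa using congrFun hzero (Fin.natAdd k i))
  rfl
end

section
/- In Construction 1, the global distance satisfies d_{2,x} = r_x − δ_x + δ + 1: if the cross parities y_x and s_x = [m_x B_{x,1}, …, m_x B_{x,p}] are determined by the global structure, then given y_x, the vector c̄_x = c_x − [0_{k_x}, y_x U_x] lies in the code with parity-check matrix H_x^G = [A_{x,x} B_{x,1} … B_{x,p}; −I_{r_x} 0]^T shifted by syndrome [0, s_x], and any r_x − δ_x + δ erasures in c̄_x are correctable: if two vectors of the form [m, m A_{x,x}] with the same known syndrome values [m B_{x,1}, …, m B_{x,p}] agree on all but at most r_x − δ_x + δ coordinates out of n_x, they are equal. -/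
/-- Construction 1, global distance `d_{2,x} = r_x - δ_x + δ + 1`: if two
local codewords `[m, mA]` have the same known cross-parity syndromes
`m B = m' B` (here `B` collects the blocks `B_{x,y}`, of total width
`δ - δ_x = e`) and agree on all but at most `r - δ_x + δ` of the `n_x`
coordinates, then they are equal. -/
theorem construction1_global_distance {F : Type*} [Field F] [DecidableEq F]
    (k r δx e : ℕ) (hδr : δx < r)
    (a : Fin (k + δx) → F) (b : Fin (r + e) → F)
    (ha : Function.Injective a) (hb : Function.Injective b)
    (hab : ∀ i j, a i ≠ b j)
    (A : Matrix (Fin k) (Fin r) F) (B : Matrix (Fin k) (Fin e) F)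
    (U : Matrix (Fin δx) (Fin r) F)
    (hA : ∀ i j, A i j = (a (Fin.castAdd δx i) - b (Fin.castAdd e j))⁻¹)
    (hB : ∀ i j, B i j = (a (Fin.castAdd δx i) - b (Fin.natAdd r j))⁻¹)
    (hU : ∀ i j, U i j = (a (Fin.natAdd k i) - b (Fin.castAdd e j))⁻¹)
    (m m' : Fin k → F)
    (hsynd : Matrix.vecMul m B = Matrix.vecMul m' B)
    (hagree : (Finset.univ.filter (fun z : Fin k ⊕ Fin r =>
        Sum.elim m (Matrix.vecMul m A) z ≠
        Sum.elim m' (Matrix.vecMul m' A) z)).card ≤ r - δx + (δx + e)) :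
    m = m' := by
  by_contra hne
  set d : Fin k → F := m - m' with hd
  have hd0 : d ≠ 0 := sub_ne_zero.mpr hne
  set α : Fin k → F := fun i => a (Fin.castAdd δx i) with hα
  have hαinj : Function.Injective α := fun i j h => by
    simpa using Fin.castAdd_injective k δx (ha h)
  set S : Finset (Fin k) := Finset.univ.filter (fun i => d i ≠ 0) with hS
  have hSne : S.Nonempty := by
    obtain ⟨i, hi⟩ := Function.ne_iff.mp hd0
    exact ⟨i, by simp only [hS, Finset.mem_filter, Finset.mem_univ, true_and]; simpa using hi⟩
  -- the key polynomial
  set P : Polynomial F := ∑ i ∈ S, Polynomial.C (d i) *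
      ∏ i' ∈ S.erase i, (Polynomial.C (α i') - Polynomial.X) with hP
  have hPeval : ∀ β : F, P.eval β = ∑ i ∈ S, d i * ∏ i' ∈ S.erase i, (α i' - β) := by
    intro β; simp [hP, Polynomial.eval_finset_sum, Polynomial.eval_prod]
  -- P ≠ 0
  obtain ⟨i₀, hi₀⟩ := hSne
  have hi₀d : d i₀ ≠ 0 := by simpa [hS] using hi₀
  have hPne : P ≠ 0 := by
    intro h
    have h0 : P.eval (α i₀) = 0 := by rw [h]; simp
    rw [hPeval] at h0
    rw [Finset.sum_eq_single i₀ (fun i hiS hii => by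
      have : i₀ ∈ S.erase i := Finset.mem_erase.mpr ⟨fun h => hii h.symm, hi₀⟩
      rw [Finset.prod_eq_zero this (by ring)]; ring)
      (fun h => absurd hi₀ h)] at h0
    rcases mul_eq_zero.mp h0 with h | h
    · exact hi₀d h
    · obtain ⟨i', hi', h⟩ := Finset.prod_eq_zero_iff.mp h
      exact (Finset.mem_erase.mp hi').1 (hαinj (sub_eq_zero.mp h))
  have hPdeg : P.natDegree ≤ S.card - 1 := by
    apply Polynomial.natDegree_sum_le_of_forall_le
    intro i hi
    calc (Polynomial.C (d i) * ∏ i' ∈ S.erase i, (Polynomial.C (α i') - Polynomial.X)).natDegree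
        ≤ (Polynomial.C (d i)).natDegree +
          (∏ i' ∈ S.erase i, (Polynomial.C (α i') - Polynomial.X)).natDegree :=
          Polynomial.natDegree_mul_le
      _ ≤ 0 + ∑ i' ∈ S.erase i, (Polynomial.C (α i') - Polynomial.X).natDegree := by
          gcongr
          · simp
          · exact Polynomial.natDegree_prod_le _ _
      _ ≤ ∑ i' ∈ S.erase i, 1 := by
          simp only [zero_add]
          apply Finset.sum_le_sum
          intro i' _
          have : Polynomial.C (α i') - Polynomial.X = -(Polynomial.X - Polynomial.C (α i')) := by ring
          rw [this, Polynomial.natDegree_neg, Polynomial.natDegree_X_sub_C]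
      _ = S.card - 1 := by rw [Finset.sum_const, smul_eq_mul, mul_one, Finset.card_erase_of_mem hi]
  -- root criterion
  have hroot : ∀ β : F, (∀ i, α i ≠ β) → (∑ i ∈ S, d i * (α i - β)⁻¹) = 0 →
      P.eval β = 0 := by
    intro β hβ hsum
    rw [hPeval]
    have : ∀ i ∈ S, d i * ∏ i' ∈ S.erase i, (α i' - β)
        = (∏ i' ∈ S, (α i' - β)) * (d i * (α i - β)⁻¹) := by
      intro i hi
      rw [← Finset.mul_prod_erase S _ hi]
      field_simp [sub_ne_zero.mpr (hβ i)]
    rw [Finset.sum_congr rfl this, ← Finset.mul_sum, hsum, mul_zero]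
  -- restrict vecMul sums to S
  have hsumA : ∀ j : Fin r, Matrix.vecMul d A j = ∑ i ∈ S, d i * (α i - b (Fin.castAdd e j))⁻¹ := by
    intro j
    have h1 : ∑ i ∈ S, d i * A i j = ∑ i, d i * A i j :=
      Finset.sum_filter_of_ne (fun i _ h h0 => h (by rw [h0, zero_mul]))
    rw [Matrix.vecMul, dotProduct, ← h1]
    exact Finset.sum_congr rfl fun i _ => by rw [hA]
  have hsumB : ∀ j : Fin e, Matrix.vecMul d B j = ∑ i ∈ S, d i * (α i - b (Fin.natAdd r j))⁻¹ := by
    intro j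
    have h1 : ∑ i ∈ S, d i * B i j = ∑ i, d i * B i j :=
      Finset.sum_filter_of_ne (fun i _ h h0 => h (by rw [h0, zero_mul]))
    rw [Matrix.vecMul, dotProduct, ← h1]
    exact Finset.sum_congr rfl fun i _ => by rw [hB]
  have hdB : Matrix.vecMul d B = 0 := by
    rw [hd, Matrix.sub_vecMul, hsynd, sub_self]
  have hdA : Matrix.vecMul d A = Matrix.vecMul m A - Matrix.vecMul m' A := by
    rw [hd, Matrix.sub_vecMul]
  -- the zero set of dA and the root set
  set ZA : Finset (Fin r) := Finset.univ.filter (fun j => Matrix.vecMul d A j = 0) with hZA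
  set W : Finset (Fin r) := Finset.univ.filter (fun j => ¬ Matrix.vecMul d A j = 0) with hW
  set T : Finset F := ZA.image (fun j => b (Fin.castAdd e j)) ∪
      Finset.univ.image (fun j : Fin e => b (Fin.natAdd r j)) with hT
  have hTroots : ∀ β ∈ T, P.eval β = 0 := by
    intro β hβ
    rw [hT, Finset.mem_union] at hβ
    rcases hβ with hβ | hβ
    · obtain ⟨j, hj, rfl⟩ := Finset.mem_image.mp hβ
      refine hroot _ (fun i => hab _ _) ?_
      rw [← hsumA j]
      simpa [hZA] using hj
    · obtain ⟨j, _, rfl⟩ := Finset.mem_image.mp hβ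
      refine hroot _ (fun i => hab _ _) ?_
      rw [← hsumB j, hdB]
      rfl
  have hTcard : T.card = ZA.card + e := by
    rw [hT, Finset.card_union_of_disjoint, Finset.card_image_of_injective _
        (fun x y h => Fin.castAdd_injective r e (hb h)),
        Finset.card_image_of_injective _ (fun x y h => by
          have h1 := congrArg Fin.val (hb h)
          simp only [Fin.natAdd] at h1
          exact Fin.ext (by omega))]
    · simp
    · rw [Finset.disjoint_left]
      rintro x hx hy
      obtain ⟨j, _, rfl⟩ := Finset.mem_image.mp hx
      obtain ⟨j', _, hj'⟩ := Finset.mem_image.mp hy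
      have := hb hj'
      have h1 : (Fin.natAdd r j' : Fin (r + e)).val = (Fin.castAdd e j : Fin (r + e)).val := by
        rw [this]
      simp only [Fin.natAdd, Fin.castAdd, Fin.castLE] at h1
      omega
  have hTle : T.card ≤ P.natDegree := by
    calc T.card ≤ P.roots.toFinset.card := by
          apply Finset.card_le_card
          intro β hβ
          rw [Multiset.mem_toFinset, Polynomial.mem_roots hPne]
          exact hTroots β hβ
      _ ≤ Multiset.card P.roots := Multiset.toFinset_card_le _
      _ ≤ P.natDegree := Polynomial.card_roots' P
  -- cardinality of the disagreement set
  have hfe : Finset.univ.filter (fun z : Fin k ⊕ Fin r =>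
        Sum.elim m (Matrix.vecMul m A) z ≠ Sum.elim m' (Matrix.vecMul m' A) z)
      = S.disjSum W := by
    ext z
    cases z with
    | inl i =>
      simp only [Finset.mem_filter, Finset.mem_univ, true_and, Finset.inl_mem_disjSum,
        hS, Sum.elim_inl]
      rw [hd]
      simp [sub_ne_zero]
    | inr j =>
      simp only [Finset.mem_filter, Finset.mem_univ, true_and, Finset.inr_mem_disjSum,
        hW, Sum.elim_inr]
      rw [hdA]
      simp [sub_ne_zero]
  rw [hfe, Finset.card_disjSum] at hagree
  have hcompl : ZA.card + W.card = r := by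
    rw [hZA, hW, Finset.card_filter_add_card_filter_not]
    simp
  have hSpos : 1 ≤ S.card := Finset.Nonempty.card_pos ⟨i₀, hi₀⟩
  have hfinal : ZA.card + e ≤ S.card - 1 := le_trans (hTcard ▸ hTle) hPdeg
  omega
end

section
/- For a totally invertible matrix construction: if T is a (k+δ)×r matrix every square submatrix of which is invertible, with top block A (k × r) and bottom block U (δ × r), δ < r, then the row space of A and the row space of U intersect trivially, row(A) ∩ row(U) = {0}, whenever k + δ ≤ r. -/
/-- If every square submatrix of `T : F^{(k+δ) × r}` is invertible (e.g. `T` a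
Cauchy matrix), `T` has top block `A` (first `k` rows) and bottom block `U`
(last `δ` rows), and `k + δ ≤ r`, then the row spaces of `A` and `U`
intersect trivially. -/
theorem row_spaces_trivial_intersection {F : Type*} [Field F]
    (k δ r : ℕ) (hδr : δ < r) (hkr : k + δ ≤ r)
    (T : Matrix (Fin (k + δ)) (Fin r) F)
    (htot : ∀ (m : ℕ) (e : Fin m → Fin (k + δ)) (f : Fin m → Fin r),
      Function.Injective e → Function.Injective f → IsUnit (T.submatrix e f)) :
    Submodule.span F (Set.range (fun i : Fin k => T (Fin.castAdd δ i))) ⊓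
      Submodule.span F (Set.range (fun i : Fin δ => T (Fin.natAdd k i))) = ⊥ := by
  have hU := htot (k + δ) id (Fin.castLE hkr) Function.injective_id
    (Fin.castLE_injective hkr)
  have hsub : LinearIndependent F (fun i => (T.submatrix id (Fin.castLE hkr)) i) :=
    Matrix.linearIndependent_rows_iff_isUnit.mpr hU
  have hrows : LinearIndependent F (fun i : Fin (k + δ) => T i) := by
    apply LinearIndependent.of_comp (LinearMap.funLeft F F (Fin.castLE hkr))
    exact hsub
  have hdisj : Disjoint (Set.range (Fin.castAdd (n := k) δ))
      (Set.range (Fin.natAdd (m := δ) k)) := by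
    rw [Set.disjoint_left]
    rintro x ⟨i, rfl⟩ ⟨j, hj⟩
    have h1 : (Fin.castAdd δ i : ℕ) < k := i.isLt
    have h2 : k ≤ (Fin.natAdd k j : ℕ) := Nat.le_add_right k j
    rw [hj] at h2
    omega
  have := hrows.disjoint_span_image hdisj
  rw [disjoint_iff] at this
  rw [show (Set.range fun i : Fin k => T (Fin.castAdd δ i)) =
      (fun i => T i) '' Set.range (Fin.castAdd δ) from (Set.range_comp _ _).symm ▸ rfl,
    show (Set.range fun i : Fin δ => T (Fin.natAdd k i)) =
      (fun i => T i) '' Set.range (Fin.natAdd k) by rw [← Set.range_comp]; rfl]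
  exact this
end

section
/- Scalability of Construction 1: adding a new local cloud does not change existing local codewords' parity structure distances. Formally: let C be the double-level code of Construction 1 with p clouds and parameters (A_{x,x}, U_x, B_{x,y}); extend it to p+1 clouds by choosing new Cauchy-matrix blocks for cloud p+1 and appending blocks B_{x,p+1}; then for each x ≤ p, the new local parity-check matrix H_x^L is unchanged, and the local minimum distance d_{1,x} = r_x − δ_x + 1 is preserved, while the global distance of cloud x increases from r_x − δ_x + δ + 1 to r_x − δ_x + δ + δ_{p+1} + 1. -/
open Finset Polynomial

private lemma filter_sum_card' {α β : Type*} [Fintype α] [Fintype β]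
    (p : α ⊕ β → Prop) [DecidablePred p] :
    (Finset.univ.filter p).card =
      (Finset.univ.filter (fun a => p (Sum.inl a))).card +
      (Finset.univ.filter (fun b => p (Sum.inr b))).card := by
  simp_rw [← Fintype.card_subtype]
  rw [← Fintype.card_sum]
  exact Fintype.card_congr Equiv.subtypeSum

/-- Core MDS property of Cauchy matrices: a nonzero message `v` together with its
Cauchy-encoded parities `v * M` has weight at least `card κ + 1`. -/
private lemma cauchy_weight {F : Type*} [Field F] [DecidableEq F] {ι κ : Type*}
    [Fintype ι] [Fintype κ] [DecidableEq ι] [DecidableEq κ]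
    (a : ι → F) (b : κ → F) (ha : Function.Injective a) (hb : Function.Injective b)
    (hab : ∀ i j, a i ≠ b j)
    (M : Matrix ι κ F) (hM : ∀ i j, M i j = (a i - b j)⁻¹)
    (v : ι → F) (hv : v ≠ 0) :
    Fintype.card κ + 1 ≤ (Finset.univ.filter (fun i => v i ≠ 0)).card
      + (Finset.univ.filter (fun j => Matrix.vecMul v M j ≠ 0)).card := by
  classical
  set S : Finset ι := Finset.univ.filter (fun i => v i ≠ 0) with hS
  have hSne : S.Nonempty := by
    rcases Function.ne_iff.mp hv with ⟨i, hi⟩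
    exact ⟨i, Finset.mem_filter.mpr ⟨Finset.mem_univ i, by simpa using hi⟩⟩
  set P : F[X] := ∑ i ∈ S, Polynomial.C (v i) * ∏ i' ∈ S.erase i, (Polynomial.C (a i') - X)
    with hP
  -- degree bound
  have hdeg : P.natDegree ≤ S.card - 1 := by
    apply Polynomial.natDegree_sum_le_of_forall_le
    intro i hi
    calc (Polynomial.C (v i) * ∏ i' ∈ S.erase i, (Polynomial.C (a i') - X)).natDegree
        ≤ (Polynomial.C (v i)).natDegree
          + (∏ i' ∈ S.erase i, (Polynomial.C (a i') - X)).natDegree :=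
          Polynomial.natDegree_mul_le
      _ ≤ 0 + ∑ i' ∈ S.erase i, (Polynomial.C (a i') - X).natDegree := by
          gcongr
          · exact le_of_eq (Polynomial.natDegree_C _)
          · exact Polynomial.natDegree_prod_le _ _
      _ ≤ 0 + ∑ _i' ∈ S.erase i, 1 := by
          gcongr with i' _
          calc (Polynomial.C (a i') - X).natDegree
              ≤ max (Polynomial.C (a i')).natDegree (X : F[X]).natDegree :=
                Polynomial.natDegree_sub_le _ _
            _ ≤ 1 := by simp [Polynomial.natDegree_X]
      _ = (S.erase i).card := by simp
      _ ≤ S.card - 1 := by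
          rw [Finset.card_erase_of_mem hi]
  -- nonzero
  have hPne : P ≠ 0 := by
    obtain ⟨i₀, hi₀⟩ := hSne
    intro h0
    have heval : P.eval (a i₀) = v i₀ * ∏ i' ∈ S.erase i₀, (a i' - a i₀) := by
      rw [hP]
      rw [Polynomial.eval_finset_sum]
      rw [Finset.sum_eq_single i₀]
      · simp [Polynomial.eval_prod]
      · intro i hi hne
        have hmem : i₀ ∈ S.erase i := Finset.mem_erase.mpr ⟨(Ne.symm hne), hi₀⟩
        simp only [Polynomial.eval_mul, Polynomial.eval_prod, Polynomial.eval_sub,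
          Polynomial.eval_C, Polynomial.eval_X]
        rw [Finset.prod_eq_zero hmem (by ring)]
        ring
      · intro h; exact absurd hi₀ h
    have hne0 : P.eval (a i₀) ≠ 0 := by
      rw [heval]
      apply mul_ne_zero
      · exact (Finset.mem_filter.mp hi₀).2
      · apply Finset.prod_ne_zero_iff.mpr
        intro i' hi'
        have : i' ≠ i₀ := (Finset.mem_erase.mp hi').1
        exact sub_ne_zero_of_ne (fun h => this (ha h))
    rw [h0] at hne0; simp at hne0
  -- zeros of v * M are roots of P
  set Z : Finset κ := Finset.univ.filter (fun j => Matrix.vecMul v M j = 0) with hZ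
  have hroot : ∀ j ∈ Z, P.eval (b j) = 0 := by
    intro j hj
    have hvM : Matrix.vecMul v M j = 0 := (Finset.mem_filter.mp hj).2
    have hsum : Matrix.vecMul v M j = ∑ i ∈ S, v i * (a i - b j)⁻¹ := by
      rw [Matrix.vecMul, dotProduct]
      rw [← Finset.sum_filter_ne_zero]
      apply Finset.sum_congr
      · apply Finset.filter_congr
        intro i _
        simp only [hM, hS, Finset.mem_filter, Finset.mem_univ, true_and]
        constructor
        · intro h hv0; exact h (by rw [hv0]; ring)
        · intro h hmul
          rcases mul_eq_zero.mp hmul with h1 | h1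
          · exact h h1
          · exact (inv_ne_zero (sub_ne_zero_of_ne (hab i j))) h1
      · intro i _; rw [hM]
    have key : ∀ i ∈ S, v i * ∏ i' ∈ S.erase i, (a i' - b j)
        = (v i * (a i - b j)⁻¹) * ∏ i' ∈ S, (a i' - b j) := by
      intro i hi
      rw [← Finset.mul_prod_erase S _ hi]
      have : (a i - b j) ≠ 0 := sub_ne_zero_of_ne (hab i j)
      field_simp
    have : P.eval (b j) = (∑ i ∈ S, v i * (a i - b j)⁻¹) * ∏ i' ∈ S, (a i' - b j) := by
      rw [hP, Polynomial.eval_finset_sum]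
      rw [Finset.sum_mul]
      apply Finset.sum_congr rfl
      intro i hi
      simp only [Polynomial.eval_mul, Polynomial.eval_prod, Polynomial.eval_sub,
        Polynomial.eval_C, Polynomial.eval_X]
      exact key i hi
    rw [this, ← hsum, hvM, zero_mul]
  have hZcard : Z.card ≤ S.card - 1 := by
    have himg : Z.image b ⊆ P.roots.toFinset := by
      intro x hx
      rcases Finset.mem_image.mp hx with ⟨j, hj, rfl⟩
      rw [Multiset.mem_toFinset, Polynomial.mem_roots hPne]
      exact hroot j hj
    calc Z.card = (Z.image b).card := (Finset.card_image_of_injective Z hb).symm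
      _ ≤ P.roots.toFinset.card := Finset.card_le_card himg
      _ ≤ Multiset.card P.roots := Multiset.toFinset_card_le _
      _ ≤ P.natDegree := Polynomial.card_roots' P
      _ ≤ S.card - 1 := hdeg
  have hcompl : Z.card + (Finset.univ.filter (fun j => Matrix.vecMul v M j ≠ 0)).card
      = Fintype.card κ := by
    rw [hZ]
    rw [Finset.card_filter_add_card_filter_not (fun j => Matrix.vecMul v M j = 0)]
    exact Finset.card_univ
  have hS1 : 1 ≤ S.card := Finset.card_pos.mpr hSne
  omega

/-- Corollary: low-weight Cauchy codewords are zero. -/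
private lemma cauchy_low_weight_eq_zero {F : Type*} [Field F] [DecidableEq F] {ι κ : Type*}
    [Fintype ι] [Fintype κ] [DecidableEq ι] [DecidableEq κ]
    (a : ι → F) (b : κ → F) (ha : Function.Injective a) (hb : Function.Injective b)
    (hab : ∀ i j, a i ≠ b j)
    (M : Matrix ι κ F) (hM : ∀ i j, M i j = (a i - b j)⁻¹)
    (v : ι → F)
    (hw : (Finset.univ.filter (fun i => v i ≠ 0)).card
      + (Finset.univ.filter (fun j => Matrix.vecMul v M j ≠ 0)).card ≤ Fintype.card κ) :
    v = 0 := by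
  by_contra hv
  have := cauchy_weight a b ha hb hab M hM v hv
  omega

/-- Scalability of Construction 1: extend the Cauchy matrix of cloud `x` by
`δ_{p+1} = enew` extra columns (new cross-parity block for the added cloud
`p + 1`).  The local parity structure `A, U` is unchanged, so the local
distance `d_{1,x} = r - δ_x + 1` is preserved (any `r - δ_x` erasures are
correctable), while the global distance increases from `r - δ_x + δ + 1` to
`r - δ_x + δ + δ_{p+1} + 1` (any `r - δ_x + δ + δ_{p+1}` erasures are
correctable given the cross-parity syndromes), where `δ = δ_x + e`. -/
theorem construction1_scalability {F : Type*} [Field F] [DecidableEq F]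
    (k r δx e enew : ℕ) (hδr : δx < r)
    (a : Fin (k + δx) → F) (b : Fin (r + (e + enew)) → F)
    (ha : Function.Injective a) (hb : Function.Injective b)
    (hab : ∀ i j, a i ≠ b j)
    (A : Matrix (Fin k) (Fin r) F) (U : Matrix (Fin δx) (Fin r) F)
    (B : Matrix (Fin k) (Fin (e + enew)) F)
    (hA : ∀ i j, A i j = (a (Fin.castAdd δx i) - b (Fin.castAdd (e + enew) j))⁻¹)
    (hU : ∀ i j, U i j = (a (Fin.natAdd k i) - b (Fin.castAdd (e + enew) j))⁻¹)
    (hB : ∀ i j, B i j = (a (Fin.castAdd δx i) - b (Fin.natAdd r j))⁻¹) :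
    (∀ (m m' : Fin k → F) (y y' : Fin δx → F),
      (Finset.univ.filter (fun z : Fin k ⊕ Fin r =>
        Sum.elim m (Matrix.vecMul m A + Matrix.vecMul y U) z ≠
        Sum.elim m' (Matrix.vecMul m' A + Matrix.vecMul y' U) z)).card ≤ r - δx →
      Sum.elim m (Matrix.vecMul m A + Matrix.vecMul y U) =
        Sum.elim m' (Matrix.vecMul m' A + Matrix.vecMul y' U)) ∧
    (∀ m m' : Fin k → F, Matrix.vecMul m B = Matrix.vecMul m' B →
      (Finset.univ.filter (fun z : Fin k ⊕ Fin r =>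
        Sum.elim m (Matrix.vecMul m A) z ≠
        Sum.elim m' (Matrix.vecMul m' A) z)).card ≤ r - δx + (δx + e) + enew →
      m = m') := by
  classical
  constructor
  · -- local distance
    intro m m' y y' hcard
    set w : Fin k → F := m - m' with hw
    set z : Fin δx → F := y - y' with hz
    set v : Fin k ⊕ Fin δx → F := Sum.elim w z with hv
    set a' : Fin k ⊕ Fin δx → F := fun i => a (finSumFinEquiv i) with ha'
    set b' : Fin r → F := fun j => b (Fin.castAdd (e + enew) j) with hb'
    set M : Matrix (Fin k ⊕ Fin δx) (Fin r) F := fun i j => (a' i - b' j)⁻¹ with hM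
    have hvM : ∀ j, Matrix.vecMul v M j =
        (Matrix.vecMul m A + Matrix.vecMul y U) j
          - (Matrix.vecMul m' A + Matrix.vecMul y' U) j := by
      intro j
      rw [Matrix.vecMul, dotProduct, Fintype.sum_sum_type]
      have h1 : ∀ i : Fin k, v (Sum.inl i) * M (Sum.inl i) j = w i * A i j := by
        intro i; simp [hv, hM, ha', hb', hA]
      have h2 : ∀ i : Fin δx, v (Sum.inr i) * M (Sum.inr i) j = z i * U i j := by
        intro i; simp [hv, hM, ha', hb', hU]
      simp only [h1, h2]
      simp only [hw, hz, Pi.sub_apply, Pi.add_apply, Matrix.vecMul, dotProduct,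
        sub_mul, Finset.sum_sub_distrib]
      ring
    have hv0 : v = 0 := by
      apply cauchy_low_weight_eq_zero a' b' (ha.comp finSumFinEquiv.injective)
        (hb.comp (Fin.castAdd_injective _ _)) (fun i j => hab _ _) M (fun i j => rfl)
      rw [filter_sum_card'] at hcard ⊢
      have hc1 : (Finset.univ.filter (fun i : Fin k => v (Sum.inl i) ≠ 0))
          = (Finset.univ.filter (fun i : Fin k =>
              Sum.elim m (Matrix.vecMul m A + Matrix.vecMul y U) (Sum.inl i) ≠
              Sum.elim m' (Matrix.vecMul m' A + Matrix.vecMul y' U) (Sum.inl i))) := by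
        apply Finset.filter_congr; intro i _
        simp [hv, hw, sub_ne_zero]
      have hc2 : (Finset.univ.filter (fun j : Fin r => Matrix.vecMul v M j ≠ 0))
          = (Finset.univ.filter (fun j : Fin r =>
              Sum.elim m (Matrix.vecMul m A + Matrix.vecMul y U) (Sum.inr j) ≠
              Sum.elim m' (Matrix.vecMul m' A + Matrix.vecMul y' U) (Sum.inr j))) := by
        apply Finset.filter_congr; intro j _
        rw [hvM]
        simp [sub_ne_zero]
      have hc3 : (Finset.univ.filter (fun i : Fin δx => v (Sum.inr i) ≠ 0)).card ≤ δx := by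
        calc (Finset.univ.filter (fun i : Fin δx => v (Sum.inr i) ≠ 0)).card
            ≤ (Finset.univ : Finset (Fin δx)).card := Finset.card_filter_le _ _
          _ = δx := by simp
      rw [hc1, hc2, Fintype.card_fin]
      omega
    have hw0 : w = 0 := funext fun i => congrFun hv0 (Sum.inl i)
    have hz0 : z = 0 := funext fun i => congrFun hv0 (Sum.inr i)
    have hm : m = m' := by
      funext i; have := congrFun hw0 i
      simpa [hw, sub_eq_zero] using this
    have hy : y = y' := by
      funext i; have := congrFun hz0 i
      simpa [hz, sub_eq_zero] using this
    rw [hm, hy]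
  · -- global distance
    intro m m' hBeq hcard
    set w : Fin k → F := m - m' with hw
    set a' : Fin k → F := fun i => a (Fin.castAdd δx i) with ha'
    set b' : Fin r ⊕ Fin (e + enew) → F := fun j => b (finSumFinEquiv j) with hb'
    set M : Matrix (Fin k) (Fin r ⊕ Fin (e + enew)) F := fun i j => (a' i - b' j)⁻¹ with hM
    have hwB : Matrix.vecMul w B = 0 := by
      rw [hw, Matrix.sub_vecMul, hBeq, sub_self]
    have hMl : ∀ j, Matrix.vecMul w M (Sum.inl j)
        = Matrix.vecMul m A j - Matrix.vecMul m' A j := by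
      intro j
      have : ∀ i, M i (Sum.inl j) = A i j := by
        intro i; simp [hM, ha', hb', hA]
      simp only [Matrix.vecMul, dotProduct, this, hw, Pi.sub_apply, sub_mul,
        Finset.sum_sub_distrib]
    have hMr : ∀ j, Matrix.vecMul w M (Sum.inr j) = 0 := by
      intro j
      have : ∀ i, M i (Sum.inr j) = B i j := by
        intro i; simp [hM, ha', hb', hB]
      have h0 := congrFun hwB j
      simpa only [Matrix.vecMul, dotProduct, this, Pi.zero_apply] using h0
    have hw0 : w = 0 := by
      apply cauchy_low_weight_eq_zero a' b' (ha.comp (Fin.castAdd_injective _ _))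
        (hb.comp finSumFinEquiv.injective) (fun i j => hab _ _) M (fun i j => rfl)
      rw [filter_sum_card'] at hcard
      rw [filter_sum_card' (fun j => Matrix.vecMul w M j ≠ 0)]
      have hc1 : (Finset.univ.filter (fun i : Fin k => w i ≠ 0))
          = (Finset.univ.filter (fun i : Fin k =>
              Sum.elim m (Matrix.vecMul m A) (Sum.inl i) ≠
              Sum.elim m' (Matrix.vecMul m' A) (Sum.inl i))) := by
        apply Finset.filter_congr; intro i _
        simp [hw, sub_ne_zero]
      have hc2 : (Finset.univ.filter (fun j : Fin r => Matrix.vecMul w M (Sum.inl j) ≠ 0))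
          = (Finset.univ.filter (fun j : Fin r =>
              Sum.elim m (Matrix.vecMul m A) (Sum.inr j) ≠
              Sum.elim m' (Matrix.vecMul m' A) (Sum.inr j))) := by
        apply Finset.filter_congr; intro j _
        rw [hMl]
        simp [sub_ne_zero]
      have hc3 : (Finset.univ.filter
          (fun j : Fin (e + enew) => Matrix.vecMul w M (Sum.inr j) ≠ 0)).card = 0 := by
        rw [Finset.card_eq_zero]
        apply Finset.filter_false_of_mem
        intro j _
        simpa using hMr j
      rw [hc1, hc2, hc3, Fintype.card_sum, Fintype.card_fin, Fintype.card_fin]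
      omega
    funext i
    have := congrFun hw0 i
    simpa [hw, sub_eq_zero] using this
end

section
/- After splitting cloud 1 into clouds 1a and 1b as in the flexibility procedure, the new local codeword c_1^a = [m_1^a, m_1^a A_{1a,1a} + (m_1^b B_{1b,1a} + y_1^a) U_1^a] can correct any r_1^a − δ_1^a local erasures, where A_{1a,1a} = A_{1,1}[1:k_1^a, 1:r_1^a] and U_1^a = U_1[1:δ_1^a, 1:r_1^a] are submatrices of blocks of a Cauchy matrix (hence themselves blocks of a Cauchy matrix): if two vectors of the form [m, m A_{1a,1a} + w U_1^a] (m ∈ F^{k_1^a}, w ∈ F^{δ_1^a}) agree on at least n_1^a − (r_1^a − δ_1^a) of the n_1^a = k_1^a + r_1^a coordinates, they are equal. -/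
open Polynomial Finset in
lemma cauchy_combination_eq_zero {F : Type*} [Field F] {ι κ : Type*} [Fintype ι] [Fintype κ]
    [DecidableEq ι] (x : ι → F) (y : κ → F)
    (hx : Function.Injective x) (hy : Function.Injective y)
    (hxy : ∀ i j, x i ≠ y j) (hcard : Fintype.card ι ≤ Fintype.card κ)
    (c : ι → F) (h : ∀ j, ∑ i, c i * (x i - y j)⁻¹ = 0) :
    ∀ i, c i = 0 := by
  intro i0
  have hne : Nonempty ι := ⟨i0⟩
  set P : F[X] := ∑ i, C (c i) * ∏ l ∈ univ.erase i, (C (x l) - X) with hP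
  have hdeg : P.natDegree < Fintype.card κ := by
    have h1 : P.natDegree ≤ Fintype.card ι - 1 := by
      refine natDegree_sum_le_of_forall_le _ _ fun i _ => ?_
      calc (C (c i) * ∏ l ∈ univ.erase i, (C (x l) - X)).natDegree
          ≤ (C (c i)).natDegree + (∏ l ∈ univ.erase i, (C (x l) - X)).natDegree :=
            natDegree_mul_le
        _ ≤ 0 + ∑ l ∈ univ.erase i, (C (x l) - X).natDegree := by
            gcongr
            · exact le_of_eq (natDegree_C _)
            · exact natDegree_prod_le _ _
        _ ≤ 0 + ∑ l ∈ univ.erase i, 1 := by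
            gcongr with l hl
            calc (C (x l) - X).natDegree = (C (x l) + (-X)).natDegree := by ring_nf
              _ ≤ max (C (x l)).natDegree (-X : F[X]).natDegree := natDegree_add_le _ _
              _ ≤ 1 := by simp
        _ = (univ.erase i).card := by simp
        _ = Fintype.card ι - 1 := by rw [card_erase_of_mem (mem_univ i), card_univ]
    have h2 : Fintype.card ι - 1 < Fintype.card κ := by
      have : 0 < Fintype.card ι := Fintype.card_pos
      omega
    exact lt_of_le_of_lt h1 h2
  have heval : ∀ j : κ, P.eval (y j) = 0 := by
    intro j
    have hprod : ∀ i : ι, (x i - y j) ≠ 0 := fun i => sub_ne_zero_of_ne (hxy i j)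
    have := h j
    have key : ∀ i : ι, c i * ∏ l ∈ univ.erase i, (x l - y j)
        = (c i * (x i - y j)⁻¹) * ∏ l : ι, (x l - y j) := by
      intro i
      rw [← Finset.mul_prod_erase univ (fun l => x l - y j) (mem_univ i), mul_assoc,
        inv_mul_cancel_left₀ (hprod i)]
    have : P.eval (y j) = (∑ i, c i * (x i - y j)⁻¹) * ∏ l : ι, (x l - y j) := by
      simp only [hP, eval_finset_sum, eval_mul, eval_C, eval_prod, eval_sub, eval_X,
        Finset.sum_mul]
      exact Finset.sum_congr rfl fun i _ => key i
    rw [this, h j, zero_mul]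
  have hP0 : P = 0 := eq_zero_of_natDegree_lt_card_of_eval_eq_zero P hy heval hdeg
  have hev : P.eval (x i0) = c i0 * ∏ l ∈ univ.erase i0, (x l - x i0) := by
    simp only [hP, eval_finset_sum, eval_mul, eval_C, eval_prod, eval_sub, eval_X]
    rw [Finset.sum_eq_single i0]
    · intro i _ hine
      exact mul_eq_zero_of_right _ (Finset.prod_eq_zero
        (Finset.mem_erase.2 ⟨fun hh => hine (hh ▸ rfl), mem_univ _⟩) (sub_self _))
    · intro h; exact absurd (mem_univ i0) h
  have hprodne : ∏ l ∈ univ.erase i0, (x l - x i0) ≠ 0 := by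
    refine Finset.prod_ne_zero_iff.2 fun l hl => sub_ne_zero_of_ne fun hh => ?_
    exact (Finset.mem_erase.1 hl).1 (hx hh)
  have := hev
  rw [hP0, eval_zero] at this
  exact (mul_eq_zero.1 this.symm).resolve_right hprodne


/-- After splitting cloud 1 into 1a and 1b, the new local codeword
`c_1^a = [m, m A_{1a,1a} + w U_1^a]` (with `A_{1a,1a}` and `U_1^a` the
indicated submatrices of the top and bottom blocks of the original
`(k_1 + δ_1) × r_1` Cauchy matrix) can correct any `r_1^a - δ_1^a` erasures:
two such vectors agreeing on at least `n_1^a - (r_1^a - δ_1^a)` of the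
`n_1^a = k_1^a + r_1^a` coordinates are equal. -/
theorem construction1_split_local_distance {F : Type*} [Field F] [DecidableEq F]
    (k1 r1 δ1 ka ra δa : ℕ)
    (hka : ka ≤ k1) (hra : ra ≤ r1) (hδa : δa ≤ δ1) (hδara : δa < ra)
    (a : Fin (k1 + δ1) → F) (b : Fin r1 → F)
    (ha : Function.Injective a) (hb : Function.Injective b)
    (hab : ∀ i j, a i ≠ b j)
    (A : Matrix (Fin k1) (Fin r1) F) (U : Matrix (Fin δ1) (Fin r1) F)
    (hA : ∀ i j, A i j = (a (Fin.castAdd δ1 i) - b j)⁻¹)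
    (hU : ∀ i j, U i j = (a (Fin.natAdd k1 i) - b j)⁻¹)
    (Aa : Matrix (Fin ka) (Fin ra) F) (Ua : Matrix (Fin δa) (Fin ra) F)
    (hAa : Aa = A.submatrix (Fin.castLE hka) (Fin.castLE hra))
    (hUa : Ua = U.submatrix (Fin.castLE hδa) (Fin.castLE hra))
    (m m' : Fin ka → F) (w w' : Fin δa → F)
    (hagree : (Finset.univ.filter (fun z : Fin ka ⊕ Fin ra =>
        Sum.elim m (Matrix.vecMul m Aa + Matrix.vecMul w Ua) z ≠
        Sum.elim m' (Matrix.vecMul m' Aa + Matrix.vecMul w' Ua) z)).card ≤ ra - δa) :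
    Sum.elim m (Matrix.vecMul m Aa + Matrix.vecMul w Ua) =
      Sum.elim m' (Matrix.vecMul m' Aa + Matrix.vecMul w' Ua) := by
  classical
  set d : Fin ka → F := fun i => m i - m' i with hd
  set v : Fin δa → F := fun i => w i - w' i with hv
  have hAa' : ∀ (i : Fin ka) (j : Fin ra),
      Aa i j = (a (Fin.castAdd δ1 (Fin.castLE hka i)) - b (Fin.castLE hra j))⁻¹ := by
    intro i j; rw [hAa]; simp [Matrix.submatrix_apply, hA]
  have hUa' : ∀ (i : Fin δa) (j : Fin ra),
      Ua i j = (a (Fin.natAdd k1 (Fin.castLE hδa i)) - b (Fin.castLE hra j))⁻¹ := by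
    intro i j; rw [hUa]; simp [Matrix.submatrix_apply, hU]
  have hdiff : ∀ j, Matrix.vecMul d Aa j + Matrix.vecMul v Ua j
      = ((Matrix.vecMul m Aa + Matrix.vecMul w Ua) j)
        - ((Matrix.vecMul m' Aa + Matrix.vecMul w' Ua) j) := by
    intro j
    simp only [Matrix.vecMul, dotProduct, Pi.add_apply, hd, hv, sub_mul]
    rw [Finset.sum_sub_distrib, Finset.sum_sub_distrib]
    ring
  set S : Finset (Fin ka) := Finset.univ.filter (fun i => d i ≠ 0) with hS
  set Z : Finset (Fin ra) :=
    Finset.univ.filter (fun j => Matrix.vecMul d Aa j + Matrix.vecMul v Ua j = 0) with hZ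
  set B : Finset (Fin ka ⊕ Fin ra) := Finset.univ.filter (fun z : Fin ka ⊕ Fin ra =>
        Sum.elim m (Matrix.vecMul m Aa + Matrix.vecMul w Ua) z ≠
        Sum.elim m' (Matrix.vecMul m' Aa + Matrix.vecMul w' Ua) z) with hB
  have hBL : B.toLeft = S := by
    ext i
    simp only [Finset.mem_toLeft, hB, hS, Finset.mem_filter, Finset.mem_univ, true_and,
      Sum.elim_inl, hd, sub_ne_zero]
  have hT : Z.card + B.toRight.card = ra := by
    have : B.toRight = Finset.univ.filter
        (fun j => ¬ (Matrix.vecMul d Aa j + Matrix.vecMul v Ua j = 0)) := by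
      ext j
      simp only [Finset.mem_toRight, hB, Finset.mem_filter, Finset.mem_univ, true_and,
        Sum.elim_inr]
      rw [hdiff j, sub_eq_zero]
    rw [this, hZ, Finset.card_filter_add_card_filter_not, Finset.card_univ,
      Fintype.card_fin]
  have hST : S.card + B.toRight.card ≤ ra - δa := by
    rw [← hBL]; rw [Finset.card_toLeft_add_card_toRight]; exact hagree
  -- set up the Cauchy injectivity argument
  set x : ↥S ⊕ Fin δa → F := Sum.elim
      (fun i : ↥S => a (Fin.castAdd δ1 (Fin.castLE hka i.1)))
      (fun i : Fin δa => a (Fin.natAdd k1 (Fin.castLE hδa i))) with hx_def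
  set y : ↥Z → F := fun j => b (Fin.castLE hra j.1) with hy_def
  set c : ↥S ⊕ Fin δa → F := Sum.elim (fun i : ↥S => d i.1) v with hc_def
  have hx : Function.Injective x := by
    rintro (i | i) (i' | i') h <;>
      simp only [hx_def, Sum.elim_inl, Sum.elim_inr] at h <;>
      have h2 := ha h
    · have : (i : Fin ka) = i' := by
        have := congrArg Fin.val h2
        simp only [Fin.coe_castAdd, Fin.coe_castLE] at this
        exact Fin.ext this
      exact congrArg Sum.inl (Subtype.ext this)
    · exfalso
      have := congrArg Fin.val h2
      simp only [Fin.coe_castAdd, Fin.coe_castLE, Fin.coe_natAdd] at this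
      have hlt : ((i : Fin ka) : ℕ) < ka := (i : Fin ka).isLt
      omega
    · exfalso
      have := congrArg Fin.val h2
      simp only [Fin.coe_castAdd, Fin.coe_castLE, Fin.coe_natAdd] at this
      have hlt : ((i' : Fin ka) : ℕ) < ka := (i' : Fin ka).isLt
      omega
    · have : i = i' := by
        have := congrArg Fin.val h2
        simp only [Fin.coe_natAdd, Fin.coe_castLE] at this
        exact Fin.ext (by omega)
      exact congrArg Sum.inr this
  have hy : Function.Injective y := by
    intro j j' h
    exact Subtype.ext (Fin.castLE_injective hra (hb h))
  have hxy : ∀ i j, x i ≠ y j := by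
    rintro (i | i) j <;> exact hab _ _
  have hcard : Fintype.card (↥S ⊕ Fin δa) ≤ Fintype.card ↥Z := by
    rw [Fintype.card_sum, Fintype.card_coe, Fintype.card_coe, Fintype.card_fin]
    omega
  have hsum : ∀ j : ↥Z, ∑ i, c i * (x i - y j)⁻¹
      = Matrix.vecMul d Aa j.1 + Matrix.vecMul v Ua j.1 := by
    intro j
    rw [Fintype.sum_sum_type]
    congr 1
    · have step1 : ∀ i : ↥S, c (Sum.inl i) * (x (Sum.inl i) - y j)⁻¹
          = d i.1 * Aa i.1 j.1 := by
        intro i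
        simp only [hc_def, hx_def, hy_def, Sum.elim_inl]
        rw [hAa']
      rw [Finset.sum_congr rfl (fun i _ => step1 i)]
      rw [Finset.sum_coe_sort S (fun i => d i * Aa i j.1)]
      have hvm : Matrix.vecMul d Aa j.1 = ∑ i, d i * Aa i j.1 := by
        simp [Matrix.vecMul, dotProduct]
      rw [hvm, hS, Finset.sum_filter_of_ne]
      intro i _ hne h0
      apply hne
      rw [h0, zero_mul]
    · have hvm : Matrix.vecMul v Ua j.1 = ∑ i, v i * Ua i j.1 := by
        simp [Matrix.vecMul, dotProduct]
      rw [hvm]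
      refine Finset.sum_congr rfl fun i _ => ?_
      simp only [hc_def, hx_def, hy_def, Sum.elim_inr]
      rw [hUa']
  have hzero : ∀ j : ↥Z, ∑ i, c i * (x i - y j)⁻¹ = 0 := by
    intro j
    rw [hsum j]
    exact (Finset.mem_filter.1 j.2).2
  have hc0 := cauchy_combination_eq_zero x y hx hy hxy hcard c hzero
  have hd0 : ∀ i, d i = 0 := by
    intro i
    by_contra hne
    have hiS : i ∈ S := by rw [hS]; exact Finset.mem_filter.2 ⟨Finset.mem_univ _, hne⟩
    exact hne (hc0 (Sum.inl ⟨i, hiS⟩))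
  have hv0 : ∀ i, v i = 0 := fun i => hc0 (Sum.inr i)
  have hdz : d = 0 := funext hd0
  have hvz : v = 0 := funext hv0
  funext z
  cases z with
  | inl i =>
    simp only [Sum.elim_inl]
    have := hd0 i
    rw [hd] at this
    exact sub_eq_zero.1 this
  | inr j =>
    simp only [Sum.elim_inr]
    have h0 : Matrix.vecMul d Aa j + Matrix.vecMul v Ua j = 0 := by
      rw [hdz, hvz, Matrix.zero_vecMul, Matrix.zero_vecMul, Pi.zero_apply, add_zero]
    rw [hdiff j] at h0
    exact sub_eq_zero.1 h0
end
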